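/- Let f : (k+1)^V → ℝ be monotone and orthant submodular with f(0) ≥ 0, let ε ≥ 0, and let f̂ : (k+1)^V → ℝ satisfy |f(x) − f̂(x)| ≤ ε for all x. Let B_1, …, B_k be nonnegative integers with B = Σ_i B_i ≤ |V|. Let s^{(0)} = 0, and for j = 1, …, B let s^{(j)} = s^{(j−1)}[e_j ↦ i_j], where e_j ∉ supp(s^{(j−1)}), |supp_{i_j}(s^{(j−1)})| < B_{i_j}, and Δ_{e_j,i_j} f̂(s^{(j−1)}) ≥ Δ_{e,i} f̂(s^{(j−1)}) for every e ∈ V \ supp(s^{(j−1)}) and every i ∈ {1,…,k} with |supp_i(s^{(j−1)})| < B_i. Then for every o ∈ (k+1)^V with |supp_i(o)| = B_i for each i ∈ {1,…,k}, the output s = s^{(B)} satisfies f(s) ≥ (1/3)·f(o) − (4/3)·(B+1)·ε. -/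

import Mathlib

namespace Stmt9

variable {V : Type*}

/-- Marginal gain `Δ_{e,i} f(x) = f(x[e↦i]) − f(x)`. -/
def marg {k : ℕ} [DecidableEq V] (f : (V → Fin (k+1)) → ℝ)
    (x : V → Fin (k+1)) (e : V) (i : Fin (k+1)) : ℝ :=
  f (Function.update x e i) - f x

/-- `x ⪯ y` : `y` agrees with `x` on the support of `x`. -/
def preceq {k : ℕ} (x y : V → Fin (k+1)) : Prop :=
  ∀ e, x e ≠ 0 → y e = x e

def MonotoneK {k : ℕ} [DecidableEq V] (f : (V → Fin (k+1)) → ℝ) : Prop :=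
  ∀ x : V → Fin (k+1), ∀ e, x e = 0 → ∀ i : Fin (k+1), i ≠ 0 →
    0 ≤ marg f x e i

def OrthantSubmodular {k : ℕ} [DecidableEq V] (f : (V → Fin (k+1)) → ℝ) : Prop :=
  ∀ x y : V → Fin (k+1), preceq x y → ∀ e, y e = 0 → ∀ i : Fin (k+1), i ≠ 0 →
    marg f x e i ≥ marg f y e i

/-- `|supp_i(x)|`, the number of elements assigned type `i`. -/
def suppCount {k : ℕ} [Fintype V] [DecidableEq V] (i : Fin (k+1))
    (x : V → Fin (k+1)) : ℕ :=
  (Finset.univ.filter (fun v => x v = i)).card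

/-! ### Auxiliary lemmas -/

/-- Comparing marginals of `f` and a perturbed oracle `fh`. -/
lemma marg_le_perturbed {k : ℕ} [DecidableEq V] (f fh : (V → Fin (k+1)) → ℝ)
    (ε : ℝ) (hclose : ∀ x, |f x - fh x| ≤ ε)
    (x : V → Fin (k+1)) (v : V) (i : Fin (k+1)) :
    marg f x v i ≤ marg fh x v i + 2 * ε := by
  have h1 := abs_le.1 (hclose (Function.update x v i))
  have h2 := abs_le.1 (hclose x)
  unfold marg
  linarith [h1.1, h1.2, h2.1, h2.2]

/-- Updating a zero coordinate to `0` does nothing to the marginal. -/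
lemma marg_zero {k : ℕ} [DecidableEq V] (f : (V → Fin (k+1)) → ℝ)
    (x : V → Fin (k+1)) (v : V) (hv : x v = 0) :
    marg f x v 0 = 0 := by
  unfold marg
  rw [show Function.update x v (0 : Fin (k+1)) = x by rw [← hv]; exact Function.update_eq_self v x]
  ring

/-- `suppCount` is invariant under precomposition with a swap. -/
lemma suppCount_comp_swap {k : ℕ} [Fintype V] [DecidableEq V] (x : V → Fin (k+1))
    (e d : V) (i : Fin (k+1)) :
    suppCount i (x ∘ Equiv.swap e d) = suppCount i x := by
  unfold suppCount
  have h : (Finset.univ.filter fun v => (x ∘ Equiv.swap e d) v = i)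
      = (Finset.univ.filter fun v => x v = i).image (Equiv.swap e d) := by
    ext v
    simp only [Finset.mem_filter, Finset.mem_univ, true_and, Finset.mem_image,
      Function.comp_apply]
    constructor
    · intro hv
      exact ⟨Equiv.swap e d v, hv, Equiv.swap_apply_self e d v⟩
    · rintro ⟨w, hw, rfl⟩
      rwa [Equiv.swap_apply_self]
  rw [h, Finset.card_image_of_injective _ (Equiv.swap e d).injective]

/-- The key per-step exchange lemma. -/
lemma step_lemma {k : ℕ} [Fintype V] [DecidableEq V]
    (f fh : (V → Fin (k+1)) → ℝ)
    (hmono : MonotoneK f) (hos : OrthantSubmodular f)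
    (ε : ℝ) (hclose : ∀ x, |f x - fh x| ≤ ε)
    (B : Fin (k+1) → ℕ)
    (x o' : V → Fin (k+1)) (e : V) (t : Fin (k+1))
    (hpre : preceq x o') (hcnt : ∀ i : Fin (k+1), i ≠ 0 → suppCount i o' = B i)
    (ht : t ≠ 0) (hxe : x e = 0) (hlt : suppCount t x < B t)
    (hgr : ∀ v, x v = 0 → ∀ i : Fin (k+1), i ≠ 0 → suppCount i x < B i →
      marg fh x e t ≥ marg fh x v i) :
    ∃ o'' : V → Fin (k+1), preceq (Function.update x e t) o'' ∧
      (∀ i : Fin (k+1), i ≠ 0 → suppCount i o'' = B i) ∧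
      f o' - f o'' ≤ 2 * marg fh x e t + 4 * ε := by
  have hmargfh : marg fh x e t ≥ -(2*ε) := by
    have h1 := marg_le_perturbed f fh ε hclose x e t
    have h2 := hmono x e hxe t ht
    linarith
  by_cases h1 : o' e = t
  · -- Case 1 : o' already assigns t to e
    refine ⟨o', ?_, hcnt, by linarith⟩
    intro v hv
    by_cases hve : v = e
    · subst hve; rwa [Function.update_self] at hv ⊢
    · rw [Function.update_of_ne hve] at hv ⊢
      exact hpre v hv
  · -- Case 2 : swap argument
    set i' := o' e with hi'
    -- find d with o' d = t and x d = 0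
    have hexd : ∃ d, o' d = t ∧ x d = 0 := by
      by_contra hcon
      push_neg at hcon
      have hsub : (Finset.univ.filter fun v => o' v = t) ⊆
          (Finset.univ.filter fun v => x v = t) := by
        intro v hv
        simp only [Finset.mem_filter, Finset.mem_univ, true_and] at hv ⊢
        have hx0 : x v ≠ 0 := hcon v hv
        rw [← hpre v hx0]; exact hv
      have := Finset.card_le_card hsub
      have hc := hcnt t ht
      unfold suppCount at hlt hc
      omega
    obtain ⟨d, hod, hxd⟩ := hexd
    have hde : d ≠ e := by
      intro h
      rw [h] at hod
      rw [hi'] at h1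
      exact h1 hod
    -- the swapped optimum
    set o'' : V → Fin (k+1) := o' ∘ Equiv.swap e d with ho''
    have ho''e : o'' e = t := by
      simp only [ho'', Function.comp_apply, Equiv.swap_apply_left]; exact hod
    have ho''d : o'' d = i' := by
      simp only [ho'', Function.comp_apply, Equiv.swap_apply_right]; rfl
    have ho''v : ∀ v, v ≠ e → v ≠ d → o'' v = o' v := by
      intro v hv1 hv2
      simp only [ho'', Function.comp_apply, Equiv.swap_apply_of_ne_of_ne hv1 hv2]
    refine ⟨o'', ?_, ?_, ?_⟩
    · -- preceq
      intro v hv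
      by_cases hve : v = e
      · subst hve; rw [Function.update_self] at hv ⊢; exact ho''e
      · rw [Function.update_of_ne hve] at hv ⊢
        have hvd : v ≠ d := by intro h; rw [h, hxd] at hv; exact hv rfl
        rw [ho''v v hve hvd]; exact hpre v hv
    · intro i hi
      rw [← hcnt i hi, ho'', suppCount_comp_swap]
    · -- the main inequality
      set z : V → Fin (k+1) :=
        Function.update (Function.update o' e 0) d 0 with hz
      have hze : z e = 0 := by
        rw [hz, Function.update_of_ne (Ne.symm hde), Function.update_self]
      have hzd : z d = 0 := by rw [hz, Function.update_self]
      have hzv : ∀ v, v ≠ e → v ≠ d → z v = o' v := by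
        intro v hv1 hv2
        rw [hz, Function.update_of_ne hv2, Function.update_of_ne hv1]
      -- x ⪯ z
      have hprez : preceq x z := by
        intro v hv
        have hv1 : v ≠ e := by intro h; rw [h, hxe] at hv; exact hv rfl
        have hv2 : v ≠ d := by intro h; rw [h, hxd] at hv; exact hv rfl
        rw [hzv v hv1 hv2]; exact hpre v hv
      have hprezd : preceq x (Function.update z d t) := by
        intro v hv
        have hv2 : v ≠ d := by intro h; rw [h, hxd] at hv; exact hv rfl
        rw [Function.update_of_ne hv2]; exact hprez v hv
      -- rewrite o' and o''
      have hoeq : o' = Function.update (Function.update z d t) e i' := by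
        funext v
        by_cases hve : v = e
        · subst hve; rw [Function.update_self]
        · rw [Function.update_of_ne hve]
          by_cases hvd : v = d
          · subst hvd; rw [Function.update_self, hod]
          · rw [Function.update_of_ne hvd, hzv v hve hvd]
      have ho''eq : o'' = Function.update (Function.update z e t) d i' := by
        funext v
        by_cases hvd : v = d
        · subst hvd; rw [Function.update_self, ho''d]
        · rw [Function.update_of_ne hvd]
          by_cases hve : v = e
          · subst hve; rw [Function.update_self, ho''e]
          · rw [Function.update_of_ne hve, hzv v hve hvd, ho''v v hve hvd]
      -- inequality A : marg f (update z d t) e i' ≤ marg fh x e t + 2ε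
      have hudte : (Function.update z d t) e = 0 := by
        rw [Function.update_of_ne (Ne.symm hde)]; exact hze
      have hA : marg f (Function.update z d t) e i' ≤ marg fh x e t + 2 * ε := by
        by_cases hi0 : i' = 0
        · rw [hi0, marg_zero f _ e hudte]; linarith
        · have hsubm := hos x (Function.update z d t) hprezd e hudte i' hi0
          have hle := marg_le_perturbed f fh ε hclose x e i'
          have hcntlt : suppCount i' x < B i' := by
            have hsub : (Finset.univ.filter fun v => x v = i') ⊆
                ((Finset.univ.filter fun v => o' v = i').erase e) := by
              intro v hv
              simp only [Finset.mem_filter, Finset.mem_univ, true_and,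
                Finset.mem_erase] at hv ⊢
              have hv1 : v ≠ e := by intro h; rw [h, hxe] at hv; exact hi0 hv.symm
              have hx0 : x v ≠ 0 := by rw [hv]; exact hi0
              exact ⟨hv1, by rw [hpre v hx0]; exact hv⟩
            have hmem : e ∈ Finset.univ.filter fun v => o' v = i' := by
              simp only [Finset.mem_filter, Finset.mem_univ, true_and]; rfl
            have h2 := Finset.card_le_card hsub
            rw [Finset.card_erase_of_mem hmem] at h2
            have h3 : 0 < (Finset.univ.filter fun v => o' v = i').card :=
              Finset.card_pos.2 ⟨e, hmem⟩
            have hc := hcnt i' hi0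
            unfold suppCount at hc ⊢
            omega
          have hgr' := hgr e hxe i' hi0 hcntlt
          linarith
      -- inequality B : marg f z d t ≤ marg fh x e t + 2ε
      have hB : marg f z d t ≤ marg fh x e t + 2 * ε := by
        have hsubm := hos x z hprez d hzd t ht
        have hle := marg_le_perturbed f fh ε hclose x d t
        have hgr' := hgr d hxd t ht hlt
        linarith
      -- inequality C : 0 ≤ marg f z e t
      have hC : 0 ≤ marg f z e t := hmono z e hze t ht
      -- inequality D : 0 ≤ marg f (update z e t) d i'
      have huzet : (Function.update z e t) d = 0 := by
        rw [Function.update_of_ne hde]; exact hzd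
      have hD : 0 ≤ marg f (Function.update z e t) d i' := by
        by_cases hi0 : i' = 0
        · rw [hi0, marg_zero f _ d huzet]
        · exact hmono _ d huzet i' hi0
      -- combine
      rw [hoeq, ho''eq]
      unfold marg at hA hB hC hD ⊢
      linarith

/-- Robustness of the greedy algorithm for monotone `k`-submodular maximization
under individual size constraints, run with a perturbed oracle `f̂`:
`f(s) ≥ (1/3)·f(o) − (4/3)·(B+1)·ε`. -/
theorem stmt9 {k : ℕ} (hk : 1 ≤ k) [Fintype V] [DecidableEq V]
    (f fh : (V → Fin (k+1)) → ℝ)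
    (hmono : MonotoneK f) (hos : OrthantSubmodular f)
    (hf0 : 0 ≤ f (fun _ => 0))
    (ε : ℝ) (hε : 0 ≤ ε)
    (hclose : ∀ x, |f x - fh x| ≤ ε)
    (B : Fin (k+1) → ℕ) (Bt : ℕ)
    (hBt : Bt = ∑ i ∈ Finset.univ.erase (0 : Fin (k+1)), B i)
    (hBV : Bt ≤ Fintype.card V)
    -- the greedy sequence `s^{(0)}, …, s^{(Bt)}`, choosing pair `(e j, t j)` at step `j`:
    (s : ℕ → V → Fin (k+1)) (e : ℕ → V) (t : ℕ → Fin (k+1))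
    (hs0 : s 0 = fun _ => 0)
    (hstep : ∀ j ∈ Finset.Icc 1 Bt,
      s j = Function.update (s (j-1)) (e j) (t j) ∧
      t j ≠ 0 ∧
      s (j-1) (e j) = 0 ∧
      suppCount (t j) (s (j-1)) < B (t j) ∧
      (∀ v, s (j-1) v = 0 → ∀ i : Fin (k+1), i ≠ 0 →
        suppCount i (s (j-1)) < B i →
        marg fh (s (j-1)) (e j) (t j) ≥ marg fh (s (j-1)) v i))
    (o : V → Fin (k+1))
    (ho : ∀ i : Fin (k+1), i ≠ 0 → suppCount i o = B i) :
    f (s Bt) ≥ (1/3) * f o - (4/3) * ((Bt : ℝ) + 1) * ε := by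
  -- main invariant
  have key : ∀ j, j ≤ Bt → ∃ o' : V → Fin (k+1), preceq (s j) o' ∧
      (∀ i : Fin (k+1), i ≠ 0 → suppCount i o' = B i) ∧
      f o - f o' ≤ 2 * (fh (s j) - fh (s 0)) + 4 * (j : ℝ) * ε := by
    intro j
    induction j with
    | zero =>
      intro _
      refine ⟨o, ?_, ho, by push_cast; ring_nf; linarith⟩
      intro v hv
      rw [hs0] at hv
      exact absurd rfl hv
    | succ n ih =>
      intro hle
      obtain ⟨o', hpre, hcnt, hbound⟩ := ih (by omega)
      obtain ⟨heq, ht0, hs0', hlt, hgr⟩ :=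
        hstep (n+1) (Finset.mem_Icc.2 ⟨by omega, hle⟩)
      simp only [Nat.add_sub_cancel] at heq ht0 hs0' hlt hgr
      obtain ⟨o'', hpre'', hcnt'', hineq⟩ :=
        step_lemma f fh hmono hos ε hclose B (s n) o' (e (n+1)) (t (n+1))
          hpre hcnt ht0 hs0' hlt hgr
      refine ⟨o'', by rw [heq]; exact hpre'', hcnt'', ?_⟩
      have hmargeq : marg fh (s n) (e (n+1)) (t (n+1)) = fh (s (n+1)) - fh (s n) := by
        rw [heq]; rfl
      rw [hmargeq] at hineq
      push_cast
      linarith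
  -- support cardinality of s j
  have hcard : ∀ j, j ≤ Bt →
      (Finset.univ.filter fun v => s j v ≠ 0).card = j := by
    intro j
    induction j with
    | zero =>
      intro _
      rw [hs0]
      simp
    | succ n ih =>
      intro hle
      obtain ⟨heq, ht0, hs0', _, _⟩ :=
        hstep (n+1) (Finset.mem_Icc.2 ⟨by omega, hle⟩)
      simp only [Nat.add_sub_cancel] at heq ht0 hs0'
      have hset : (Finset.univ.filter fun v => s (n+1) v ≠ 0)
          = insert (e (n+1)) (Finset.univ.filter fun v => s n v ≠ 0) := by
        ext v
        simp only [Finset.mem_filter, Finset.mem_univ, true_and, Finset.mem_insert, heq]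
        by_cases hv : v = e (n+1)
        · subst hv
          simp [Function.update_self, ht0]
        · rw [Function.update_of_ne hv]
          simp [hv]
      have hnotmem : e (n+1) ∉ (Finset.univ.filter fun v => s n v ≠ 0) := by
        simp only [Finset.mem_filter, Finset.mem_univ, true_and, not_not]
        exact hs0'
      rw [hset, Finset.card_insert_of_notMem hnotmem, ih (by omega)]
  -- support cardinality of any o' with the prescribed counts
  obtain ⟨o', hpre, hcnt, hbound⟩ := key Bt le_rfl
  have hocard : (Finset.univ.filter fun v => o' v ≠ 0).card = Bt := by
    have hmaps : ∀ v ∈ (Finset.univ.filter fun w => o' w ≠ 0),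
        o' v ∈ Finset.univ.erase (0 : Fin (k+1)) := by
      intro v hv
      simp only [Finset.mem_filter, Finset.mem_univ, true_and] at hv
      simp only [Finset.mem_erase, Finset.mem_univ, and_true]
      exact hv
    rw [Finset.card_eq_sum_card_fiberwise hmaps, hBt]
    apply Finset.sum_congr rfl
    intro i hi
    simp only [Finset.mem_erase, Finset.mem_univ, and_true] at hi
    rw [← hcnt i hi]
    unfold suppCount
    congr 1
    ext v
    simp only [Finset.mem_filter, Finset.mem_univ, true_and]
    constructor
    · exact fun h => h.2
    · intro h; exact ⟨by rw [h]; exact hi, h⟩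
  -- s Bt = o'
  have hsub : (Finset.univ.filter fun v => s Bt v ≠ 0)
      ⊆ (Finset.univ.filter fun v => o' v ≠ 0) := by
    intro v hv
    simp only [Finset.mem_filter, Finset.mem_univ, true_and] at hv ⊢
    rw [hpre v hv]; exact hv
  have hseteq : (Finset.univ.filter fun v => s Bt v ≠ 0)
      = (Finset.univ.filter fun v => o' v ≠ 0) :=
    Finset.eq_of_subset_of_card_le hsub (by rw [hocard, hcard Bt le_rfl])
  have hfinal : s Bt = o' := by
    funext v
    by_cases hv : s Bt v = 0
    · have : v ∉ (Finset.univ.filter fun w => o' w ≠ 0) := by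
        rw [← hseteq]
        simp only [Finset.mem_filter, Finset.mem_univ, true_and, not_not]
        exact hv
      simp only [Finset.mem_filter, Finset.mem_univ, true_and, not_not] at this
      rw [hv, this]
    · exact (hpre v hv).symm
  rw [← hfinal, hs0] at hbound
  have h1 := abs_le.1 (hclose (s Bt))
  have h2 := abs_le.1 (hclose fun _ => 0)
  linarith [h1.1, h1.2, h2.1, h2.2]

end Stmt9
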